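/- arXiv:2411.06430 — 2 statements merged into one kernel-verified Lean document; each statement's English description precedes it below -/
import Mathlib

section
/- For all natural numbers a, b ≥ 1 with (a,b) ≠ (1,1), gcd(a,b) = (((−4^(ab(ab+a+b))) mod ((4^(a²b) − 1)(4^(ab²) − 1))) mod 4^(ab)) − 2, where the computation is carried out in the integers and x mod y denotes the unique representative in [0, y) for y > 0. -/
/-!
Put `x = 4 ^ (a * b)`, `A = x ^ a`, `B = x ^ b` and `d = gcd a b`; the modulus is `(A - 1) * (B - 1)`
and the dividend is `-x ^ (a * b) * A * B`. Since `x ^ b ≡ 1` modulo `B - 1`, the quotient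
`(x ^ (a * b) - 1) / (A - 1) = ∑ i < b, x ^ (a * i)` is congruent to `∑ i < b, x ^ (a * i % b)`, and
`a * i % b` runs `d` times through the multiples of `d` below `b`. Hence the remainder is
`(A - 1) * (B - 1) - (A + B - 1 + d * (A - 1) * H)` with `H = ∑ k < b / d, x ^ (d * k)`; it lies in
`[0, (A - 1) * (B - 1))` because `2 * d * H ≤ (x ^ d - 1) * H = B - 1`, and modulo `x` it is `d + 2`.
-/

open Finset

section Sums

variable {M : Type*} [AddCommMonoid M]

theorem Finset.sum_range_mul_comp_mod (f : ℕ → M) (m n : ℕ) :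
    ∑ i ∈ range (m * n), f (i % n) = m • ∑ j ∈ range n, f j := by
  induction m with
  | zero => simp
  | succ m ih =>
    rw [Nat.succ_mul, sum_range_add, ih, succ_nsmul]
    congr 1
    refine sum_congr rfl fun j hj => ?_
    rw [Nat.mul_add_mod_self_right, Nat.mod_eq_of_lt (mem_range.1 hj)]

theorem Finset.sum_range_comp_mul_mod_of_coprime (f : ℕ → M) {a n : ℕ} (h : a.Coprime n) :
    ∑ j ∈ range n, f (a * j % n) = ∑ k ∈ range n, f k := by
  rcases n.eq_zero_or_pos with rfl | hn
  · simp
  have hmaps : Set.MapsTo (fun j => a * j % n) (range n) (range n) :=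
    fun j _ => mem_range.2 (Nat.mod_lt _ hn)
  have hinj : Set.InjOn (fun j => a * j % n) (range n) := fun i hi j hj hij =>
    (Nat.ModEq.cancel_left_of_coprime h.symm hij).eq_of_lt_of_lt (mem_range.1 hi) (mem_range.1 hj)
  exact sum_nbij _ hmaps hinj (surjOn_of_injOn_of_card_le _ hmaps hinj le_rfl) fun _ _ => rfl

theorem Finset.sum_range_comp_mul_mod (f : ℕ → M) (a b : ℕ) :
    ∑ i ∈ range b, f (a * i % b) =
      a.gcd b • ∑ k ∈ range (b / a.gcd b), f (a.gcd b * k) := by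
  obtain ⟨a', b', hcop, ha, hb⟩ := Nat.exists_coprime a b
  set d := a.gcd b
  rcases d.eq_zero_or_pos with hd | hd
  · simp [(Nat.gcd_eq_zero_iff.1 hd).2]
  rw [mul_comm] at ha hb
  have hmod (i : ℕ) : a * i % b = d * (a' * (i % b') % b') := by
    rw [Nat.mul_mod_mod, ha, hb, mul_assoc, Nat.mul_mod_mul_left]
  simp_rw [hmod]
  rw [hb, sum_range_mul_comp_mod (fun j => f (d * (a' * j % b'))), Nat.mul_div_cancel_left _ hd,
    sum_range_comp_mul_mod_of_coprime (fun k => f (d * k)) hcop]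

end Sums

section Divisibility

variable {R : Type*} [CommRing R] (x : R) (a b : ℕ)

theorem pow_sub_one_dvd_pow_sub_pow_mod (n : ℕ) : x ^ b - 1 ∣ x ^ n - x ^ (n % b) := by
  have h := (pow_one_sub_dvd_pow_mul_sub_one x b (n / b)).mul_right (x ^ (n % b))
  rwa [sub_mul, one_mul, ← pow_add, Nat.div_add_mod] at h

theorem pow_sub_one_dvd_geom_sum_sub_gcd_mul :
    x ^ b - 1 ∣ ∑ i ∈ range b, (x ^ a) ^ i -
      a.gcd b * ∑ k ∈ range (b / a.gcd b), (x ^ a.gcd b) ^ k := by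
  have h := sum_range_comp_mul_mod (fun n => x ^ n) a b
  simp only [← pow_mul, ← nsmul_eq_mul] at h ⊢
  rw [← h, ← sum_sub_distrib]
  exact dvd_sum fun i _ => pow_sub_one_dvd_pow_sub_pow_mod x b (a * i)

theorem pow_sub_one_mul_pow_sub_one_dvd_pow_mul_sub_one_sub :
    (x ^ a - 1) * (x ^ b - 1) ∣ x ^ (a * b) - 1 -
      a.gcd b * (x ^ a - 1) * ∑ k ∈ range (b / a.gcd b), (x ^ a.gcd b) ^ k := by
  obtain ⟨w, hw⟩ := pow_sub_one_dvd_geom_sum_sub_gcd_mul x a b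
  have hgeom : x ^ (a * b) - 1 = (x ^ a - 1) * ∑ i ∈ range b, (x ^ a) ^ i := by
    rw [mul_geom_sum, pow_mul]
  exact ⟨w, by linear_combination hgeom + (x ^ a - 1) * hw⟩

theorem pow_sub_one_mul_pow_sub_one_dvd_pow_mul_pow_mul_pow_sub :
    (x ^ a - 1) * (x ^ b - 1) ∣ x ^ (a * b) * x ^ a * x ^ b -
      (x ^ a + x ^ b - 1 +
        a.gcd b * (x ^ a - 1) * ∑ k ∈ range (b / a.gcd b), (x ^ a.gcd b) ^ k) := by
  obtain ⟨u, hu⟩ := pow_one_sub_dvd_pow_mul_sub_one x a b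
  obtain ⟨v, hv⟩ := mul_comm a b ▸ pow_one_sub_dvd_pow_mul_sub_one x b a
  obtain ⟨w, hw⟩ := pow_sub_one_mul_pow_sub_one_dvd_pow_mul_sub_one_sub x a b
  exact ⟨x ^ b * v + u + 1 + w,
    by linear_combination (x ^ a - 1) * x ^ b * hv + (x ^ b - 1) * hu + hw⟩

end Divisibility

section Remainders

variable {x : ℤ} {a b : ℕ}

theorem neg_pow_mul_pow_mul_pow_emod (hx : 6 ≤ x) (ha : 0 < a) (hb : 0 < b) :
    -(x ^ (a * b) * x ^ a * x ^ b) % ((x ^ a - 1) * (x ^ b - 1)) =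
      (x ^ a - 1) * (x ^ b - 1) - (x ^ a + x ^ b - 1 +
        a.gcd b * (x ^ a - 1) * ∑ k ∈ range (b / a.gcd b), (x ^ a.gcd b) ^ k) := by
  set d := a.gcd b
  set H := ∑ k ∈ range (b / d), (x ^ d) ^ k
  have hA : 6 ≤ x ^ a := hx.trans (le_self_pow₀ (by linarith) ha.ne')
  have hB : 6 ≤ x ^ b := hx.trans (le_self_pow₀ (by linarith) hb.ne')
  have hH : 0 ≤ H := sum_nonneg fun k _ => pow_nonneg (pow_nonneg (by linarith) _) _
  refine (Int.modEq_iff_dvd.2 ?_).eq.trans (Int.emod_eq_of_lt ?_ ?_)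
  · exact (dvd_add (dvd_refl _) (pow_sub_one_mul_pow_sub_one_dvd_pow_mul_pow_mul_pow_sub x a b)).trans
      (dvd_of_eq (by ring))
  · have hD : 2 * (d : ℤ) + 1 ≤ x ^ d := calc
      2 * (d : ℤ) + 1 = 1 + d * 2 := by ring
      _ ≤ (1 + 2) ^ d := one_add_mul_le_pow (by norm_num) d
      _ ≤ x ^ d := pow_le_pow_left₀ (by norm_num) (by linarith) d
    have hHD : (x ^ d - 1) * H = x ^ b - 1 := by
      rw [mul_geom_sum, ← pow_mul, Nat.mul_div_cancel' (Nat.gcd_dvd_right a b)]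
    have hdH : 2 * d * H ≤ x ^ b - 1 := hHD ▸ mul_le_mul_of_nonneg_right (by linarith) hH
    nlinarith [mul_le_mul_of_nonneg_left hdH (by linarith : (0 : ℤ) ≤ x ^ a - 1),
      mul_nonneg (by linarith : (0 : ℤ) ≤ x ^ a - 6) (by linarith : (0 : ℤ) ≤ x ^ b - 6)]
  · have : 0 ≤ d * (x ^ a - 1) * H := mul_nonneg (mul_nonneg d.cast_nonneg (by linarith)) hH
    linarith

theorem emod_self_eq_gcd_add_two (hd : (a.gcd b : ℤ) + 2 < x) (ha : 0 < a) (hb : 0 < b) :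
    ((x ^ a - 1) * (x ^ b - 1) - (x ^ a + x ^ b - 1 +
        a.gcd b * (x ^ a - 1) * ∑ k ∈ range (b / a.gcd b), (x ^ a.gcd b) ^ k)) % x =
      a.gcd b + 2 := by
  have hA : x ^ a ≡ 0 [ZMOD x] := Int.modEq_zero_iff_dvd.2 (dvd_pow_self x ha.ne')
  have hB : x ^ b ≡ 0 [ZMOD x] := Int.modEq_zero_iff_dvd.2 (dvd_pow_self x hb.ne')
  have hD : x ^ a.gcd b ≡ 0 [ZMOD x] :=
    Int.modEq_zero_iff_dvd.2 (dvd_pow_self x (Nat.gcd_pos_of_pos_left b ha).ne')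
  have hH : ∑ k ∈ range (b / a.gcd b), (x ^ a.gcd b) ^ k ≡ 1 [ZMOD x] := by
    have h := Int.ModEq.sum fun k (_ : k ∈ range (b / a.gcd b)) => hD.pow k
    rwa [zero_geom_sum, if_neg (Nat.div_pos (Nat.gcd_le_right (m := a) hb)
      (Nat.gcd_pos_of_pos_right a hb)).ne'] at h
  rw [← Int.emod_eq_of_lt (by positivity : (0 : ℤ) ≤ a.gcd b + 2) hd]
  change _ ≡ _ [ZMOD x]
  calc _ ≡ (0 - 1) * (0 - 1) - (0 + 0 - 1 + a.gcd b * (0 - 1) * 1) [ZMOD x] := by gcongr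
    _ = a.gcd b + 2 := by ring

end Remainders

theorem gcd_mod_mod_base4 (a b : ℕ) (ha : 1 ≤ a) (hb : 1 ≤ b) (hab : (a, b) ≠ (1, 1)) :
    (Nat.gcd a b : ℤ) =
      ((-(4 : ℤ) ^ (a * b * (a * b + a + b)))
          % (((4 : ℤ) ^ (a ^ 2 * b) - 1) * ((4 : ℤ) ^ (a * b ^ 2) - 1)))
        % (4 : ℤ) ^ (a * b) - 2 := by
  have hab2 : 2 ≤ a * b := by
    have h : a * b ≠ 1 := fun h => hab (by obtain ⟨rfl, rfl⟩ := mul_eq_one.1 h; rfl)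
    have := Nat.mul_pos ha hb
    omega
  set x : ℤ := 4 ^ (a * b)
  have hx : 6 ≤ x := calc
    (6 : ℤ) ≤ 4 ^ 2 := by norm_num
    _ ≤ x := pow_le_pow_right₀ (by norm_num) hab2
  have hgcd : (a.gcd b : ℤ) + 2 < x := calc
    (a.gcd b : ℤ) + 2 < 1 + (a * b : ℕ) * 3 := by
      have : a.gcd b ≤ a * b := (Nat.gcd_le_left b ha).trans (Nat.le_mul_of_pos_right a hb)
      push_cast at this ⊢
      linarith
    _ ≤ (1 + 3) ^ (a * b) := one_add_mul_le_pow (by norm_num) _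
    _ = x := by norm_num [x]
  have hpow (n : ℕ) : (4 : ℤ) ^ (a * b * n) = x ^ n := pow_mul 4 (a * b) n
  rw [show a * b * (a * b + a + b) = a * b * (a * b) + a * b * a + a * b * b by ring,
    show a ^ 2 * b = a * b * a by ring, show a * b ^ 2 = a * b * b by ring,
    pow_add, pow_add, hpow, hpow, hpow,
    neg_pow_mul_pow_mul_pow_emod hx ha hb, emod_self_eq_gcd_add_two hgcd ha hb]
  ring
end

section
/- For all natural numbers a, b ≥ 1, gcd(a,b) = ⌊(2^(a²b(b+1)) − 2^(a²b))·(2^(a²b²) − 1) / ((2^(a²b) − 1)(2^(ab²) − 1)·2^(a²b²))⌋ mod 2^(ab). -/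
/-!
Put `x = 2 ^ (a * b)`. The quotient is
`x ^ a * (x ^ (a * b) - 1) ^ 2 / ((x ^ a - 1) * (x ^ b - 1) * x ^ (a * b))`.
Factoring `x ^ (a * b) - 1` once as a geometric series in `x ^ a` and once in `x ^ b` cancels
`(x ^ a - 1) * (x ^ b - 1)`, leaving `(∑_{i < b, j < a} x ^ (a * (i + 1) + b * j)) / x ^ (a * b)`.
These are `a * b < x` powers of `x`, so there are no carries in base `x`, and the result mod `x`
is the digit at position `a * b`: the number of pairs with `a * (i + 1) + b * j = a * b`.
Such a pair is determined by `m = i + 1 ∈ (0, b]` with `b ∣ a * m`, i.e. with `b / gcd a b ∣ m`,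
and there are exactly `gcd a b` such `m`.
-/

open Finset

theorem Nat.pow_mul_sub_one_eq_geom_sum_mul {x : ℕ} (hx : 0 < x) (m n : ℕ) :
    x ^ (m * n) - 1 = (∑ i ∈ range n, x ^ (m * i)) * (x ^ m - 1) := by
  simpa only [pow_mul] using (geom_sum_mul_of_one_le (Nat.one_le_pow m x hx) n).symm

section Digits

variable {ι : Type*} (s : Finset ι) (f : ι → ℕ) {x : ℕ}

theorem Nat.sum_pow_lt_pow {n : ℕ} (hs : #s < x) (hf : ∀ i ∈ s, f i < n) :
    ∑ i ∈ s, x ^ f i < x ^ n := by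
  rcases n.eq_zero_or_pos with rfl | hn
  · simp [Finset.eq_empty_of_forall_notMem fun i hi => (hf i hi).not_ge (Nat.zero_le _)]
  calc ∑ i ∈ s, x ^ f i ≤ ∑ _i ∈ s, x ^ (n - 1) :=
        sum_le_sum fun i hi => Nat.pow_le_pow_right (by omega) (by have := hf i hi; omega)
    _ = #s * x ^ (n - 1) := by rw [sum_const, smul_eq_mul]
    _ < x * x ^ (n - 1) := Nat.mul_lt_mul_of_pos_right hs (Nat.pow_pos (by omega))
    _ = x ^ n := mul_pow_sub_one hn.ne' x

theorem Nat.sum_pow_modEq_card_filter_eq_zero :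
    ∑ i ∈ s, x ^ f i ≡ #{i ∈ s | f i = 0} [MOD x] := by
  rw [card_filter]
  refine Nat.ModEq.sum fun i _ => ?_
  split_ifs with h
  · rw [h, pow_zero]
  · exact Nat.modEq_zero_iff_dvd.mpr (dvd_pow_self x h)

theorem Nat.sum_pow_div_pow_mod (n : ℕ) (hs : #s < x) :
    (∑ i ∈ s, x ^ f i) / x ^ n % x = #{i ∈ s | f i = n} := by
  have hsplit : ∑ i ∈ s, x ^ f i =
      ∑ i ∈ s with f i < n, x ^ f i + x ^ n * ∑ i ∈ s with ¬ f i < n, x ^ (f i - n) := by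
    rw [mul_sum, ← sum_filter_add_sum_filter_not s (fun i => f i < n)]
    congr 1
    refine sum_congr rfl fun i hi => ?_
    rw [← pow_add, Nat.add_sub_cancel' (not_lt.mp (mem_filter.mp hi).2)]
  have hlow : ∑ i ∈ s with f i < n, x ^ f i < x ^ n :=
    Nat.sum_pow_lt_pow _ f ((card_filter_le s _).trans_lt hs) fun i hi => (mem_filter.mp hi).2
  rw [hsplit, Nat.add_mul_div_left _ _ (Nat.pow_pos (by omega)), Nat.div_eq_of_lt hlow, zero_add,
    Nat.sum_pow_modEq_card_filter_eq_zero, filter_filter,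
    Nat.mod_eq_of_lt ((card_filter_le _ _).trans_lt hs)]
  exact congrArg card (filter_congr fun i _ => by omega)

end Digits

theorem Nat.dvd_mul_iff_div_gcd_dvd {a b m : ℕ} (hb : 0 < b) : b ∣ a * m ↔ b / gcd a b ∣ m := by
  have hg := Nat.gcd_pos_of_pos_right a hb
  obtain ⟨a', b', hcop, ha', hb'⟩ := Nat.exists_coprime a b
  calc b ∣ a * m ↔ b' * gcd a b ∣ a' * m * gcd a b := by rw [← hb', mul_right_comm, ← ha']
    _ ↔ b' ∣ m := by rw [Nat.mul_dvd_mul_iff_right hg, hcop.symm.dvd_mul_left]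
    _ ↔ b / gcd a b ∣ m := by rw [Nat.div_eq_of_eq_mul_left hg hb']

theorem Nat.card_filter_dvd_mul_Ioc {a b : ℕ} (hb : 0 < b) :
    #{m ∈ Ioc 0 b | b ∣ a * m} = gcd a b := by
  simp_rw [Nat.dvd_mul_iff_div_gcd_dvd hb]
  rw [Nat.Ioc_filter_dvd_card_eq_div, Nat.div_div_self (Nat.gcd_dvd_right a b) hb.ne']

theorem card_filter_mul_add_mul_eq {a b : ℕ} (ha : 0 < a) (hb : 0 < b) :
    #{p ∈ range b ×ˢ range a | a * (p.1 + 1) + b * p.2 = a * b} = #{m ∈ Ioc 0 b | b ∣ a * m} := by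
  have hsol {i j : ℕ} (hj : j < a) : a * (i + 1) + b * j = a * b ↔ a * (i + 1) = b * (a - j) := by
    have : b * j ≤ b * a := Nat.mul_le_mul_left b hj.le
    rw [Nat.mul_sub, mul_comm b a] at *
    omega
  refine card_bij' (fun p _ => p.1 + 1) (fun m _ => (m - 1, a - a * m / b)) ?_ ?_ ?_ ?_
  · rintro ⟨i, j⟩ hp
    simp only [mem_filter, mem_product, mem_range, mem_Ioc] at hp ⊢
    exact ⟨⟨i.succ_pos, hp.1.1⟩, a - j, (hsol hp.1.2).mp hp.2⟩
  · intro m hm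
    simp only [mem_filter, mem_Ioc] at hm
    obtain ⟨⟨hm0, hmb⟩, k, hk⟩ := hm
    have hk0 : 0 < k := Nat.pos_of_mul_pos_left (hk ▸ Nat.mul_pos ha hm0)
    have hka : k ≤ a := Nat.le_of_mul_le_mul_left (hk ▸ mul_comm a b ▸ Nat.mul_le_mul_left a hmb) hb
    simp only [mem_filter, mem_product, mem_range, hk, Nat.mul_div_cancel_left k hb]
    refine ⟨⟨by omega, by omega⟩, (hsol (by omega)).mpr ?_⟩
    rw [Nat.sub_add_cancel hm0, hk, Nat.sub_sub_self hka]
  · rintro ⟨i, j⟩ hp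
    simp only [mem_filter, mem_product, mem_range] at hp
    rw [(hsol hp.1.2).mp hp.2, Nat.mul_div_cancel_left _ hb, Nat.add_sub_cancel,
      Nat.sub_sub_self hp.1.2.le]
  · intro m hm
    exact Nat.sub_add_cancel (mem_Ioc.mp (mem_filter.mp hm).1).1

theorem sum_pow_mul_add_mul_eq (x a b : ℕ) :
    ∑ p ∈ range b ×ˢ range a, x ^ (a * (p.1 + 1) + b * p.2) =
      x ^ a * (∑ i ∈ range b, x ^ (a * i)) * ∑ j ∈ range a, x ^ (b * j) := by
  rw [sum_product, mul_assoc, sum_mul_sum, mul_sum]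
  refine sum_congr rfl fun i _ => ?_
  rw [mul_sum]
  exact sum_congr rfl fun j _ => by ring

theorem mazzanti_numerator_eq {x : ℕ} (hx : 0 < x) (a b : ℕ) :
    (x ^ (a * b + a) - x ^ a) * (x ^ (a * b) - 1) =
      (x ^ a - 1) * (x ^ b - 1) * ∑ p ∈ range b ×ˢ range a, x ^ (a * (p.1 + 1) + b * p.2) := by
  have hfac : x ^ (a * b + a) - x ^ a = x ^ a * (x ^ (a * b) - 1) := by
    rw [pow_add, Nat.mul_sub_one, mul_comm]
  rw [hfac, sum_pow_mul_add_mul_eq]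
  nth_rw 2 [mul_comm a b]
  rw [Nat.pow_mul_sub_one_eq_geom_sum_mul hx, Nat.pow_mul_sub_one_eq_geom_sum_mul hx]
  ring

theorem mazzanti_quotient_mod_eq_gcd {a b x : ℕ} (ha : 0 < a) (hb : 0 < b) (hx : a * b < x) :
    (x ^ (a * b + a) - x ^ a) * (x ^ (a * b) - 1) / ((x ^ a - 1) * (x ^ b - 1) * x ^ (a * b)) % x =
      Nat.gcd a b := by
  have hx1 : 1 < x := lt_of_le_of_lt (Nat.mul_pos ha hb) hx
  have hD : 0 < (x ^ a - 1) * (x ^ b - 1) :=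
    Nat.mul_pos (Nat.sub_pos_of_lt (Nat.one_lt_pow ha.ne' hx1))
      (Nat.sub_pos_of_lt (Nat.one_lt_pow hb.ne' hx1))
  have hcard : #(range b ×ˢ range a) < x := by rwa [card_product, card_range, card_range, mul_comm]
  rw [mazzanti_numerator_eq (by omega), Nat.mul_div_mul_left _ _ hD,
    Nat.sum_pow_div_pow_mod _ _ _ hcard, card_filter_mul_add_mul_eq ha hb,
    Nat.card_filter_dvd_mul_Ioc hb]

theorem mazzanti_gcd (a b : ℕ) (ha : 1 ≤ a) (hb : 1 ≤ b) :
    Nat.gcd a b =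
      ((2 ^ (a ^ 2 * b * (b + 1)) - 2 ^ (a ^ 2 * b)) * (2 ^ (a ^ 2 * b ^ 2) - 1) /
          ((2 ^ (a ^ 2 * b) - 1) * (2 ^ (a * b ^ 2) - 1) * 2 ^ (a ^ 2 * b ^ 2)))
        % 2 ^ (a * b) := by
  rw [show a ^ 2 * b * (b + 1) = a * b * (a * b + a) by ring, show a ^ 2 * b = a * b * a by ring,
    show a ^ 2 * b ^ 2 = a * b * (a * b) by ring, show a * b ^ 2 = a * b * b by ring,
    pow_mul 2 (a * b), pow_mul 2 (a * b), pow_mul 2 (a * b), pow_mul 2 (a * b)]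
  exact (mazzanti_quotient_mod_eq_gcd ha hb Nat.lt_two_pow_self).symm
end
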